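/- arXiv:1312.4864 — 4 statements merged into one kernel-verified Lean document; each statement's English description precedes it below -/
import Mathlib

section
/- Discrete Grönwall-type stability: Let 0 < γ < 1, τ > 0, t_k = kτ, and let (E_n)_{n≥0} be a sequence of nonnegative reals such that for every n ≥ 0, ∑_{s=0}^{n} (t_{n−s+1}^{1−γ} − t_{n−s}^{1−γ})(E_{s+1} − E_s) ≤ 0. Then E_n ≤ E_0 for all n ≥ 0. -/
open Finset

/-! Write `b m = t (m+1) - t m`. Summation by parts turns the hypothesis at step `n` into
`b 0 (E (n+1) - E 0) ≤ ∑_{k<n} (b (n-k-1) - b (n-k)) (E (k+1) - E 0)`. Concavity of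
`x ↦ x ^ (1-γ)` makes `b` antitone, so the weights on the right are nonnegative, while by strong
induction every `E (k+1) - E 0` with `k < n` is nonpositive; as `b 0 > 0`, `E (n+1) ≤ E 0`. -/

theorem sum_range_succ_mul_sub_eq {R : Type*} [CommRing R] (b F : ℕ → R) (n : ℕ) :
    ∑ s ∈ range (n + 1), b (n - s) * (F (s + 1) - F s)
      = b 0 * (F (n + 1) - F 0)
        - ∑ k ∈ range n, (b (n - (k + 1)) - b (n - k)) * (F (k + 1) - F 0) := by
  have hG : ∀ i, ∑ j ∈ range i, (F (j + 1) - F j) = F i - F 0 := sum_range_sub F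
  simpa only [smul_eq_mul, hG, add_tsub_cancel_right, Nat.sub_self]
    using sum_range_by_parts (fun s => b (n - s)) (fun s => F (s + 1) - F s) (n + 1)

theorem le_apply_zero_of_sum_mul_sub_nonpos {R : Type*} [CommRing R] [LinearOrder R]
    [IsStrictOrderedRing R] {b E : ℕ → R} (hb : Antitone b) (hb0 : 0 < b 0)
    (h : ∀ n, ∑ s ∈ range (n + 1), b (n - s) * (E (s + 1) - E s) ≤ 0) (n : ℕ) :
    E n ≤ E 0 := by
  induction n using Nat.strong_induction_on with
  | _ n ih =>
  match n with
  | 0 => exact le_rfl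
  | n + 1 =>
    have hsum : ∑ k ∈ range n, (b (n - (k + 1)) - b (n - k)) * (E (k + 1) - E 0) ≤ 0 := by
      refine sum_nonpos fun k hk => mul_nonpos_of_nonneg_of_nonpos ?_ ?_
      · exact sub_nonneg.mpr (hb (Nat.sub_le_sub_left k.le_succ n))
      · exact sub_nonpos.mpr (ih (k + 1) (by simpa using hk))
    have hstep := h n
    rw [sum_range_succ_mul_sub_eq] at hstep
    have hscaled : b 0 * (E (n + 1) - E 0) ≤ 0 := by linarith
    exact sub_nonpos.mp (nonpos_of_mul_nonpos_right hscaled hb0)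

theorem ConcaveOn.antitone_sub_natCast_mul {f : ℝ → ℝ} (hf : ConcaveOn ℝ (Set.Ici 0) f)
    {τ : ℝ} (hτ : 0 < τ) : Antitone fun m : ℕ => f ((m + 1 : ℕ) * τ) - f (m * τ) := by
  refine antitone_nat_of_succ_le fun m => ?_
  have hm : (0 : ℝ) ≤ m * τ := by positivity
  have hslope := hf.slope_anti_adjacent (x := m * τ) (y := (m + 1 : ℕ) * τ)
    (z := (m + 1 + 1 : ℕ) * τ) hm (by simp only [Set.mem_Ici]; positivity)
    (by push_cast; linarith) (by push_cast; linarith)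
  have hz : ((m + 1 + 1 : ℕ) : ℝ) * τ - (m + 1 : ℕ) * τ = τ := by push_cast; ring
  have hy : ((m + 1 : ℕ) : ℝ) * τ - m * τ = τ := by push_cast; ring
  rw [hz, hy, div_le_div_iff_of_pos_right hτ] at hslope
  exact hslope

theorem stmt_5_general (γ τ : ℝ) (hγ0 : 0 < γ) (hγ1 : γ < 1) (hτ : 0 < τ)
    (t : ℕ → ℝ) (ht : ∀ m : ℕ, t m = ((m:ℝ) * τ) ^ (1 - γ))
    (E : ℕ → ℝ)
    (h : ∀ n : ℕ,
      ∑ s ∈ Finset.range (n + 1), (t (n - s + 1) - t (n - s)) * (E (s + 1) - E s) ≤ 0) :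
    ∀ n : ℕ, E n ≤ E 0 := by
  have hp : 0 < 1 - γ := by linarith
  refine le_apply_zero_of_sum_mul_sub_nonpos (b := fun m => t (m + 1) - t m) ?_ ?_ h
  · simp only [ht]
    exact (Real.concaveOn_rpow hp.le (by linarith)).antitone_sub_natCast_mul hτ
  · simpa [ht, Real.zero_rpow hp.ne'] using Real.rpow_pos_of_pos hτ (1 - γ)

theorem stmt_5 (γ τ : ℝ) (hγ0 : 0 < γ) (hγ1 : γ < 1) (hτ : 0 < τ)
    (t : ℕ → ℝ) (ht : ∀ m : ℕ, t m = ((m:ℝ) * τ) ^ (1 - γ))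
    (E : ℕ → ℝ) (hE : ∀ n, 0 ≤ E n)
    (h : ∀ n : ℕ,
      ∑ s ∈ Finset.range (n + 1), (t (n - s + 1) - t (n - s)) * (E (s + 1) - E s) ≤ 0) :
    ∀ n : ℕ, E n ≤ E 0 :=
  stmt_5_general γ τ hγ0 hγ1 hτ t ht E h
end

section
/- L1-discretization consistency: Let 0 < α < 1, τ > 0, and v ∈ C³[0,T]. For t_{j+1} = (j+1)τ ≤ T, the difference between the Caputo derivative ∂_{0t_{j+1}}^α v and its L1 approximation Δ_{0t_{j+1}}^α v = Γ(2−α)^{−1} ∑_{s=0}^{j} (t_{j−s+1}^{1−α} − t_{j−s}^{1−α})(v(t_{s+1}) − v(t_s))/τ satisfies |∂_{0t_{j+1}}^α v − Δ_{0t_{j+1}}^α v| ≤ C τ^{2−α} with a constant C depending only on α, T and max_{[0,T]}(|v''| + |v'''|). -/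
/-!
On the cell `[t_k, t_{k+1}]` the Caputo integral and the L1 sum differ by
`∫ (v' - q_k) w`, where `w s = (t_{j+1} - s)^(-α)` and `q_k` is the difference quotient of `v`.
By the mean value theorem `q_k = v' ξ` for some `ξ` in the cell, so `|v' - q_k| ≤ K τ` with `K`
a Lipschitz constant of `v'` (finite as `v` is `C²`). On the cells `k < j` the function
`v' - q_k` has mean zero, so `w` may be replaced by `w - w t_k`, which is bounded by the increment
of the increasing function `w` over the cell; these bounds telescope to `K τ² w t_j = K τ^(2-α)`.
The last cell, where `w` is singular but integrable, contributes `K τ ∫ w = K τ^(2-α) / (1 - α)`.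
-/

open Finset MeasureTheory Set
open scoped NNReal

noncomputable def caputoDeriv (α : ℝ) (v : ℝ → ℝ) (t : ℝ) : ℝ :=
  1 / Real.Gamma (1 - α) * ∫ s in (0 : ℝ)..t, deriv v s * (t - s) ^ (-α)

/-- The L1 approximation of `caputoDeriv α v ((j + 1) * τ)` on the grid `t_k = k * τ`. -/
noncomputable def l1Approx (α : ℝ) (v : ℝ → ℝ) (τ : ℝ) (j : ℕ) : ℝ :=
  1 / Real.Gamma (2 - α) * ∑ s ∈ range (j + 1),
    ((((j - s + 1 : ℕ) : ℝ) * τ) ^ (1 - α) - (((j - s : ℕ) : ℝ) * τ) ^ (1 - α)) *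
      ((v (((s : ℝ) + 1) * τ) - v ((s : ℝ) * τ)) / τ)

lemma intervalIntegrable_sub_rpow {r : ℝ} (hr : -1 < r) (b c d : ℝ) :
    IntervalIntegrable (fun s => (b - s) ^ r) volume c d := by
  simpa using
    (intervalIntegral.intervalIntegrable_rpow' (a := b - c) (b := b - d) hr).comp_sub_left b

lemma integral_sub_rpow {r : ℝ} (hr : -1 < r) (b c d : ℝ) :
    ∫ s in c..d, (b - s) ^ r = ((b - c) ^ (r + 1) - (b - d) ^ (r + 1)) / (r + 1) := by
  rw [intervalIntegral.integral_comp_sub_left (fun x => x ^ r) b, integral_rpow (Or.inl hr)]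

lemma l1Approx_eq {α : ℝ} (hα1 : α < 1) (v : ℝ → ℝ) (τ : ℝ) (j : ℕ) :
    l1Approx α v τ j = 1 / Real.Gamma (1 - α) * ∑ k ∈ range (j + 1),
      (v (((k : ℝ) + 1) * τ) - v (k * τ)) / τ *
        ∫ s in (k : ℝ) * τ..((k : ℝ) + 1) * τ, (((j : ℝ) + 1) * τ - s) ^ (-α) := by
  have h1α : 1 - α ≠ 0 := by linarith
  rw [l1Approx, show 2 - α = (1 - α) + 1 by ring, Real.Gamma_add_one h1α, mul_sum, mul_sum]
  refine sum_congr rfl fun k hk => ?_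
  have hkj : k ≤ j := Nat.lt_succ_iff.1 (mem_range.1 hk)
  rw [integral_sub_rpow (by linarith), Nat.cast_add_one, Nat.cast_sub hkj,
    show -α + 1 = 1 - α by ring]
  field_simp
  ring_nf

lemma integral_deriv_mul_eq {v g : ℝ → ℝ} {a b : ℝ} (hab : a ≤ b)
    (hg : ∀ x ∈ Ioo a b, HasDerivAt v (g x) x) (w : ℝ → ℝ) :
    ∫ s in a..b, deriv v s * w s = ∫ s in a..b, g s * w s := by
  refine intervalIntegral.integral_congr_ae ?_
  filter_upwards [Measure.ae_ne volume b] with x hxb hx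
  rw [uIoc_of_le hab] at hx
  rw [(hg x ⟨hx.1, lt_of_le_of_ne hx.2 hxb⟩).deriv]

section Cell

variable {v g : ℝ → ℝ} {K : ℝ≥0} {a c : ℝ}

lemma abs_sub_slope_le_of_lipschitzOnWith (hac : a < c) (hv : ContinuousOn v (Icc a c))
    (hg : ∀ x ∈ Ioo a c, HasDerivAt v (g x) x) (hK : LipschitzOnWith K g (Icc a c))
    {s : ℝ} (hs : s ∈ Icc a c) : |g s - (v c - v a) / (c - a)| ≤ K * (c - a) := by
  obtain ⟨ξ, hξ, hξ_eq⟩ := exists_hasDerivAt_eq_slope v g hac hv hg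
  rw [← hξ_eq]
  calc |g s - g ξ| ≤ K * |s - ξ| := hK.dist_le_mul s hs ξ (Ioo_subset_Icc_self hξ)
    _ ≤ K * (c - a) := by
      gcongr
      rw [abs_le]
      constructor <;> linarith [hs.1, hs.2, hξ.1, hξ.2]

lemma integral_sub_slope_eq_zero (hac : a < c) (hv : ContinuousOn v (Icc a c))
    (hg : ∀ x ∈ Ioo a c, HasDerivAt v (g x) x) (hg_cont : ContinuousOn g (Icc a c)) :
    ∫ s in a..c, (g s - (v c - v a) / (c - a)) = 0 := by
  have hg_int : IntervalIntegrable g volume a c := hg_cont.intervalIntegrable_of_Icc hac.le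
  rw [intervalIntegral.integral_sub hg_int intervalIntegrable_const,
    intervalIntegral.integral_eq_sub_of_hasDerivAt_of_le hac.le hv hg hg_int,
    intervalIntegral.integral_const, smul_eq_mul, mul_div_cancel₀ _ (sub_ne_zero.2 hac.ne'),
    sub_self]

lemma abs_integral_sub_slope_mul_le_of_monotoneOn (hac : a < c)
    (hv : ContinuousOn v (Icc a c)) (hg : ∀ x ∈ Ioo a c, HasDerivAt v (g x) x)
    (hK : LipschitzOnWith K g (Icc a c)) {w : ℝ → ℝ} (hw : ContinuousOn w (Icc a c))
    (hw_mono : MonotoneOn w (Icc a c)) :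
    |∫ s in a..c, (g s - (v c - v a) / (c - a)) * w s| ≤ K * (c - a) ^ 2 * (w c - w a) := by
  set q := (v c - v a) / (c - a)
  have hf : ContinuousOn (fun s => g s - q) (Icc a c) := hK.continuousOn.sub continuousOn_const
  have hmean : ∫ s in a..c, (g s - q) * w s = ∫ s in a..c, (g s - q) * (w s - w a) := by
    have hsplit : ∫ s in a..c, (g s - q) * (w s - w a)
        = (∫ s in a..c, (g s - q) * w s) - (∫ s in a..c, (g s - q)) * w a := by
      have hfw : IntervalIntegrable (fun s => (g s - q) * w s) volume a c :=
        (hf.mul hw).intervalIntegrable_of_Icc hac.le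
      have hfwa : IntervalIntegrable (fun s => (g s - q) * w a) volume a c :=
        (hf.mul continuousOn_const).intervalIntegrable_of_Icc hac.le
      rw [← intervalIntegral.integral_mul_const, ← intervalIntegral.integral_sub hfw hfwa]
      simp only [mul_sub]
    rw [hsplit, integral_sub_slope_eq_zero hac hv hg hK.continuousOn, zero_mul, sub_zero]
  have hbound : ∀ s ∈ uIoc a c, ‖(g s - q) * (w s - w a)‖ ≤ K * (c - a) * (w c - w a) := by
    intro s hs
    rw [uIoc_of_le hac.le] at hs
    have hs' : s ∈ Icc a c := Ioc_subset_Icc_self hs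
    have hwa : w a ≤ w s := hw_mono (left_mem_Icc.2 hac.le) hs' hs.1.le
    have hwc : w s ≤ w c := hw_mono hs' (right_mem_Icc.2 hac.le) hs.2
    rw [Real.norm_eq_abs, abs_mul, abs_of_nonneg (sub_nonneg.2 hwa)]
    exact mul_le_mul (abs_sub_slope_le_of_lipschitzOnWith hac hv hg hK hs')
      (by linarith) (by linarith) (by have := hac; positivity)
  rw [hmean]
  calc _ ≤ K * (c - a) * (w c - w a) * |c - a| :=
        intervalIntegral.norm_integral_le_of_norm_le_const hbound
    _ = K * (c - a) ^ 2 * (w c - w a) := by rw [abs_of_pos (sub_pos.2 hac)]; ring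

lemma abs_integral_sub_slope_mul_le_of_nonneg (hac : a < c)
    (hv : ContinuousOn v (Icc a c)) (hg : ∀ x ∈ Ioo a c, HasDerivAt v (g x) x)
    (hK : LipschitzOnWith K g (Icc a c)) {w : ℝ → ℝ} (hw : IntervalIntegrable w volume a c)
    (hw_nonneg : ∀ s ∈ Icc a c, 0 ≤ w s) :
    |∫ s in a..c, (g s - (v c - v a) / (c - a)) * w s| ≤ K * (c - a) * ∫ s in a..c, w s := by
  rw [← intervalIntegral.integral_const_mul, ← Real.norm_eq_abs]
  refine intervalIntegral.norm_integral_le_of_norm_le hac.le (ae_of_all _ fun s hs => ?_)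
    (hw.const_mul _)
  have hs' : s ∈ Icc a c := Ioc_subset_Icc_self hs
  rw [Real.norm_eq_abs, abs_mul, abs_of_nonneg (hw_nonneg s hs')]
  exact mul_le_mul_of_nonneg_right (abs_sub_slope_le_of_lipschitzOnWith hac hv hg hK hs')
    (hw_nonneg s hs')

end Cell

section Grid

variable {α τ : ℝ} {v g : ℝ → ℝ} {K : ℝ≥0}

lemma integral_mul_sub_sum_slope_mul_eq_sum (hτ : 0 < τ) (j : ℕ) {w : ℝ → ℝ}
    (hg : ContinuousOn g (Icc 0 (((j : ℝ) + 1) * τ)))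
    (hw : ∀ k ≤ j, IntervalIntegrable w volume ((k : ℝ) * τ) (((k : ℝ) + 1) * τ)) :
    (∫ s in (0 : ℝ)..((j : ℝ) + 1) * τ, g s * w s)
        - ∑ k ∈ range (j + 1), (v (((k : ℝ) + 1) * τ) - v (k * τ)) / τ *
            ∫ s in (k : ℝ) * τ..((k : ℝ) + 1) * τ, w s
      = ∑ k ∈ range (j + 1), ∫ s in (k : ℝ) * τ..((k : ℝ) + 1) * τ,
            (g s - (v (((k : ℝ) + 1) * τ) - v (k * τ)) / τ) * w s := by
  have hgw : ∀ k < j + 1, IntervalIntegrable (fun s => g s * w s) volume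
      ((k : ℝ) * τ) (((k : ℝ) + 1) * τ) := by
    intro k hk
    have hkj : (k : ℝ) + 1 ≤ j + 1 := by exact_mod_cast hk
    refine (hw k (Nat.lt_succ_iff.1 hk)).continuousOn_mul (hg.mono ?_)
    rw [Set.uIcc_of_le (by linarith)]
    exact Icc_subset_Icc (by positivity) (by gcongr)
  have hsplit := intervalIntegral.sum_integral_adjacent_intervals
    (a := fun k : ℕ => (k : ℝ) * τ) (fun k hk => by push_cast; exact hgw k hk)
  push_cast at hsplit
  rw [zero_mul] at hsplit
  rw [← hsplit, ← sum_sub_distrib]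
  refine sum_congr rfl fun k hk => ?_
  rw [← intervalIntegral.integral_const_mul,
    ← intervalIntegral.integral_sub (hgw k (mem_range.1 hk))
      ((hw k (Nat.lt_succ_iff.1 (mem_range.1 hk))).const_mul _)]
  simp only [sub_mul]

lemma sum_abs_integral_sub_slope_mul_rpow_le (hα0 : 0 < α) (hτ : 0 < τ) (j : ℕ)
    (hv : ContinuousOn v (Icc 0 (((j : ℝ) + 1) * τ)))
    (hg : ∀ x ∈ Ioo 0 (((j : ℝ) + 1) * τ), HasDerivAt v (g x) x)
    (hK : LipschitzOnWith K g (Icc 0 (((j : ℝ) + 1) * τ))) :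
    ∑ k ∈ range j, |∫ s in (k : ℝ) * τ..((k : ℝ) + 1) * τ,
        (g s - (v (((k : ℝ) + 1) * τ) - v (k * τ)) / τ) * (((j : ℝ) + 1) * τ - s) ^ (-α)|
      ≤ K * τ ^ (2 - α) := by
  set b := ((j : ℝ) + 1) * τ with hb
  set w : ℝ → ℝ := fun s => (b - s) ^ (-α) with hw
  have hcell : ∀ k ∈ range j, |∫ s in (k : ℝ) * τ..((k : ℝ) + 1) * τ,
      (g s - (v (((k : ℝ) + 1) * τ) - v (k * τ)) / τ) * w s|
        ≤ K * τ ^ 2 * (w ((k + 1) * τ) - w (k * τ)) := by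
    intro k hk
    have hkj : (k : ℝ) + 1 ≤ j := by exact_mod_cast mem_range.1 hk
    have hpos : ∀ s ∈ Icc ((k : ℝ) * τ) ((k + 1) * τ), 0 < b - s := fun s hs => by
      nlinarith [hs.2]
    have hsub : Icc ((k : ℝ) * τ) ((k + 1) * τ) ⊆ Icc 0 b :=
      Icc_subset_Icc (by positivity) (mul_le_mul_of_nonneg_right (by linarith) hτ.le)
    have hw_cont : ContinuousOn w (Icc ((k : ℝ) * τ) ((k + 1) * τ)) :=
      (continuousOn_const.sub continuousOn_id).rpow_const fun s hs => Or.inl (hpos s hs).ne'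
    have hw_mono : MonotoneOn w (Icc ((k : ℝ) * τ) ((k + 1) * τ)) := fun x _ y hy hxy =>
      Real.rpow_le_rpow_of_nonpos (hpos y hy) (by linarith) (by linarith)
    have h := abs_integral_sub_slope_mul_le_of_monotoneOn (by linarith) (hv.mono hsub)
      (fun x hx => hg x (Ioo_subset_Ioo (by positivity)
        (hsub (right_mem_Icc.2 (by linarith))).2 hx))
      (hK.mono hsub) hw_cont hw_mono
    rwa [show ((k : ℝ) + 1) * τ - k * τ = τ by ring] at h
  have hwj : w (j * τ) = τ ^ (-α) := by simp only [hw, hb]; ring_nf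
  have hτα : τ ^ (2 - α) = τ ^ 2 * w (j * τ) := by
    rw [hwj, ← Real.rpow_natCast, ← Real.rpow_add hτ]
    norm_num [sub_eq_add_neg]
  have hw0 : 0 ≤ w 0 := Real.rpow_nonneg (by simp only [sub_zero]; positivity) _
  have htel := sum_range_sub (fun k : ℕ => w (k * τ)) j
  push_cast at htel
  calc _ ≤ ∑ k ∈ range j, K * τ ^ 2 * (w ((k + 1) * τ) - w (k * τ)) := sum_le_sum hcell
    _ = K * τ ^ 2 * (w (j * τ) - w 0) := by rw [← mul_sum, htel, zero_mul]
    _ ≤ K * τ ^ (2 - α) := by rw [hτα]; nlinarith [show (0:ℝ) ≤ K * τ ^ 2 by positivity]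

lemma abs_integral_sub_slope_mul_rpow_le {a c : ℝ} (hα1 : α < 1) (hac : a < c)
    (hv : ContinuousOn v (Icc a c)) (hg : ∀ x ∈ Ioo a c, HasDerivAt v (g x) x)
    (hK : LipschitzOnWith K g (Icc a c)) :
    |∫ s in a..c, (g s - (v c - v a) / (c - a)) * (c - s) ^ (-α)|
      ≤ K * (c - a) ^ (2 - α) / (1 - α) := by
  have h1α : 0 < 1 - α := by linarith
  have h := abs_integral_sub_slope_mul_le_of_nonneg hac hv hg hK
    (intervalIntegrable_sub_rpow (r := -α) (by linarith) c a c)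
    (fun s hs => Real.rpow_nonneg (by linarith [hs.2]) _)
  rw [integral_sub_rpow (by linarith), sub_self, Real.zero_rpow (by linarith),
    sub_zero, show -α + 1 = 1 - α by ring] at h
  rw [show (2 : ℝ) - α = 1 + (1 - α) by ring, Real.rpow_add (sub_pos.2 hac), Real.rpow_one]
  calc _ ≤ _ := h
    _ = _ := by ring

theorem abs_integral_mul_rpow_sub_sum_le (hα0 : 0 < α) (hα1 : α < 1) (hτ : 0 < τ) (j : ℕ)
    (hv : ContinuousOn v (Icc 0 (((j : ℝ) + 1) * τ)))
    (hg : ∀ x ∈ Ioo 0 (((j : ℝ) + 1) * τ), HasDerivAt v (g x) x)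
    (hK : LipschitzOnWith K g (Icc 0 (((j : ℝ) + 1) * τ))) :
    |(∫ s in (0 : ℝ)..((j : ℝ) + 1) * τ, g s * (((j : ℝ) + 1) * τ - s) ^ (-α))
        - ∑ k ∈ range (j + 1), (v (((k : ℝ) + 1) * τ) - v (k * τ)) / τ *
            ∫ s in (k : ℝ) * τ..((k : ℝ) + 1) * τ, (((j : ℝ) + 1) * τ - s) ^ (-α)|
      ≤ K * (1 + 1 / (1 - α)) * τ ^ (2 - α) := by
  rw [integral_mul_sub_sum_slope_mul_eq_sum hτ j hK.continuousOn
    (fun k _ => intervalIntegrable_sub_rpow (by linarith) _ _ _), sum_range_succ]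
  have hlast := abs_integral_sub_slope_mul_rpow_le hα1 (by linarith : (j : ℝ) * τ < (j + 1) * τ)
    (hv.mono (Icc_subset_Icc (by positivity) le_rfl))
    (fun x hx => hg x (Ioo_subset_Ioo (by positivity) le_rfl hx))
    (hK.mono (Icc_subset_Icc (by positivity) le_rfl))
  rw [show ((j : ℝ) + 1) * τ - j * τ = τ by ring] at hlast
  calc _ ≤ K * τ ^ (2 - α) + K * τ ^ (2 - α) / (1 - α) :=
        (abs_add_le _ _).trans (add_le_add ((abs_sum_le_sum_abs _ _).trans
          (sum_abs_integral_sub_slope_mul_rpow_le hα0 hτ j hv hg hK)) hlast)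
    _ = K * (1 + 1 / (1 - α)) * τ ^ (2 - α) := by ring

end Grid

theorem stmt_7 (α T : ℝ) (hα0 : 0 < α) (hα1 : α < 1) (hT : 0 < T)
    (v : ℝ → ℝ) (hv : ContDiffOn ℝ 3 v (Set.Icc 0 T)) :
    ∃ C : ℝ, 0 ≤ C ∧
      ∀ (τ : ℝ) (j : ℕ), 0 < τ → ((j:ℝ) + 1) * τ ≤ T →
        |(1 / Real.Gamma (1 - α)) *
            (∫ s in (0:ℝ)..(((j:ℝ) + 1) * τ),
              deriv v s * (((j:ℝ) + 1) * τ - s) ^ (-α))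
          - (1 / Real.Gamma (2 - α)) *
            ∑ s ∈ Finset.range (j + 1),
              ((((j - s + 1 : ℕ):ℝ) * τ) ^ (1 - α) - (((j - s : ℕ):ℝ) * τ) ^ (1 - α)) *
                ((v (((s:ℝ) + 1) * τ) - v ((s:ℝ) * τ)) / τ)|
          ≤ C * τ ^ (2 - α) := by
  set g := derivWithin v (Icc 0 T)
  have hg : ∀ x ∈ Ioo 0 T, HasDerivAt v (g x) x := fun x hx =>
    (hv.differentiableOn (by norm_num) x (Ioo_subset_Icc_self hx)).hasDerivWithinAt.hasDerivAt
      (Icc_mem_nhds hx.1 hx.2)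
  obtain ⟨K, hK⟩ : ∃ K, LipschitzOnWith K g (Icc 0 T) :=
    (hv.derivWithin (uniqueDiffOn_Icc hT) (m := 2) (by norm_num)).exists_lipschitzOnWith
      (by norm_num) (convex_Icc 0 T) isCompact_Icc
  have h1α : 0 < 1 - α := by linarith
  have hΓ : 0 < Real.Gamma (1 - α) := Real.Gamma_pos_of_pos h1α
  refine ⟨K * (1 + 1 / (1 - α)) / Real.Gamma (1 - α), by positivity, fun τ j hτ hjT => ?_⟩
  change |caputoDeriv α v ((j + 1) * τ) - l1Approx α v τ j| ≤ _
  have hsub : Icc 0 (((j : ℝ) + 1) * τ) ⊆ Icc 0 T := Icc_subset_Icc_right hjT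
  have hg' : ∀ x ∈ Ioo 0 (((j : ℝ) + 1) * τ), HasDerivAt v (g x) x := fun x hx =>
    hg x (Ioo_subset_Ioo_right hjT hx)
  rw [caputoDeriv, integral_deriv_mul_eq (by positivity) hg', l1Approx_eq hα1, ← mul_sub,
    abs_mul, abs_of_pos (one_div_pos.2 hΓ)]
  calc _ ≤ 1 / Real.Gamma (1 - α) * (K * (1 + 1 / (1 - α)) * τ ^ (2 - α)) :=
        mul_le_mul_of_nonneg_left (abs_integral_mul_rpow_sub_sum_le hα0 hα1 hτ j
          (hv.continuousOn.mono hsub) hg' (hK.mono hsub)) (by positivity)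
    _ = _ := by ring
end

section
/- Midpoint kernel cancellation estimate: Let 0 < α < 1, M ≥ 0, τ > 0, t_k = kτ, and suppose |c_s| ≤ M for s = 0,…,j. Then | ∑_{s=0}^{j} c_s ∫_{t_s}^{t_{s+1}} (η − t_{s+1/2}) (t_{j+1} − η)^{−α} dη | ≤ (2^α M /(4)) · τ^{2−α} /((1−α)(2−α)), where t_{s+1/2} = (s + 1/2)τ. -/
/-!
The kernel `g(η) = (t_{j+1} - η)^{-α}` is increasing, and for an increasing `g` the midpoint
moment `∫_a^b (η - (a+b)/2) g(η) dη` lies between `0` and `(b-a)²/8 · (g b - g a)`. On the cells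
`s < j` this makes `I_s ≥ 0`, and the upper bounds telescope to at most `τ^{2-α}/8`. The last cell,
where the kernel is singular, is computed exactly: `I_j = α τ^{2-α} / (2(1-α)(2-α)) ≥ 0`. Hence
`|∑ c_s I_s| ≤ M ∑ I_s ≤ M (2 + α + α²) τ^{2-α} / (8(1-α)(2-α))`, and `2 + α + α² ≤ 2^{1+α}` on
`[0, 1]` because `2^{1+α} - (2 + α + α²)` is concave and vanishes at both ends.
-/

open Set Finset intervalIntegral MeasureTheory

theorem integral_sub_mul_const (m c a b : ℝ) :
    ∫ x in a..b, (x - m) * c = ((b - m) ^ 2 - (a - m) ^ 2) / 2 * c := by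
  rw [intervalIntegral.integral_mul_const, integral_comp_sub_right (fun x ↦ x), integral_id]

theorem intervalIntegrable_sub_mul_const (m c a b : ℝ) :
    IntervalIntegrable (fun x ↦ (x - m) * c) volume a b :=
  ((continuous_sub_right m).mul continuous_const).intervalIntegrable a b

section Midpoint

variable {g : ℝ → ℝ} {a b : ℝ}

theorem MonotoneOn.intervalIntegrable_sub_mul {u v : ℝ} (hg : MonotoneOn g (Icc a b))
    (hau : a ≤ u) (huv : u ≤ v) (hvb : v ≤ b) (m : ℝ) :
    IntervalIntegrable (fun x ↦ (x - m) * g x) volume u v := by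
  refine IntervalIntegrable.continuousOn_mul ?_ (by fun_prop)
  exact (hg.mono (by rw [uIcc_of_le huv]; exact Icc_subset_Icc hau hvb)).intervalIntegrable

theorem MonotoneOn.integral_sub_midpoint_mul_nonneg (hg : MonotoneOn g (Icc a b)) (hab : a ≤ b) :
    0 ≤ ∫ x in a..b, (x - (a + b) / 2) * g x := by
  obtain ⟨m, hm⟩ : ∃ m, m = (a + b) / 2 := ⟨_, rfl⟩
  rw [← hm]
  have ham : a ≤ m := by linarith
  have hmb : m ≤ b := by linarith
  have hleft : ∫ x in a..m, (x - m) * g m ≤ ∫ x in a..m, (x - m) * g x :=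
    integral_mono_on ham (intervalIntegrable_sub_mul_const ..)
      (hg.intervalIntegrable_sub_mul le_rfl ham hmb m) fun x hx ↦
        mul_le_mul_of_nonpos_left (hg ⟨hx.1, hx.2.trans hmb⟩ ⟨ham, hmb⟩ hx.2) (by linarith [hx.2])
  have hright : ∫ x in m..b, (x - m) * g m ≤ ∫ x in m..b, (x - m) * g x :=
    integral_mono_on hmb (intervalIntegrable_sub_mul_const ..)
      (hg.intervalIntegrable_sub_mul ham hmb le_rfl m) fun x hx ↦
        mul_le_mul_of_nonneg_left (hg ⟨ham, hmb⟩ ⟨ham.trans hx.1, hx.2⟩ hx.1) (by linarith [hx.1])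
  rw [← integral_add_adjacent_intervals (hg.intervalIntegrable_sub_mul le_rfl ham hmb m)
    (hg.intervalIntegrable_sub_mul ham hmb le_rfl m)]
  rw [integral_sub_mul_const] at hleft hright
  subst hm
  nlinarith

theorem MonotoneOn.integral_sub_midpoint_mul_le (hg : MonotoneOn g (Icc a b)) (hab : a ≤ b) :
    ∫ x in a..b, (x - (a + b) / 2) * g x ≤ (b - a) ^ 2 / 8 * (g b - g a) := by
  obtain ⟨m, hm⟩ : ∃ m, m = (a + b) / 2 := ⟨_, rfl⟩
  rw [← hm]
  have ham : a ≤ m := by linarith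
  have hmb : m ≤ b := by linarith
  have hleft : ∫ x in a..m, (x - m) * g x ≤ ∫ x in a..m, (x - m) * g a :=
    integral_mono_on ham (hg.intervalIntegrable_sub_mul le_rfl ham hmb m)
      (intervalIntegrable_sub_mul_const ..) fun x hx ↦
        mul_le_mul_of_nonpos_left (hg ⟨le_rfl, hab⟩ ⟨hx.1, hx.2.trans hmb⟩ hx.1) (by linarith [hx.2])
  have hright : ∫ x in m..b, (x - m) * g x ≤ ∫ x in m..b, (x - m) * g b :=
    integral_mono_on hmb (hg.intervalIntegrable_sub_mul ham hmb le_rfl m)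
      (intervalIntegrable_sub_mul_const ..) fun x hx ↦
        mul_le_mul_of_nonneg_left (hg ⟨ham.trans hx.1, hx.2⟩ ⟨hab, le_rfl⟩ hx.2) (by linarith [hx.1])
  rw [← integral_add_adjacent_intervals (hg.intervalIntegrable_sub_mul le_rfl ham hmb m)
    (hg.intervalIntegrable_sub_mul ham hmb le_rfl m)]
  rw [integral_sub_mul_const] at hleft hright
  subst hm
  nlinarith

end Midpoint

theorem sum_integral_sub_midpoint_mul_le {g : ℝ → ℝ} {τ : ℝ} {j : ℕ} (hτ : 0 ≤ τ)
    (hg : MonotoneOn g (Icc 0 (j * τ))) :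
    ∑ s ∈ range j, ∫ x in (s : ℝ) * τ..((s : ℝ) + 1) * τ, (x - ((s : ℝ) + 1 / 2) * τ) * g x
      ≤ τ ^ 2 / 8 * (g (j * τ) - g 0) := by
  set F : ℕ → ℝ := fun n ↦ τ ^ 2 / 8 * g (n * τ)
  have hcell : ∀ s ∈ range j, ∫ x in (s : ℝ) * τ..((s : ℝ) + 1) * τ,
      (x - ((s : ℝ) + 1 / 2) * τ) * g x ≤ F (s + 1) - F s := by
    intro s hs
    have hsj : (s : ℝ) + 1 ≤ j := by exact_mod_cast mem_range.1 hs
    have hsub : Icc ((s : ℝ) * τ) ((s + 1) * τ) ⊆ Icc 0 (j * τ) :=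
      Icc_subset_Icc (by positivity) (by nlinarith)
    have := (hg.mono hsub).integral_sub_midpoint_mul_le (by nlinarith)
    rw [show ((s : ℝ) * τ + (s + 1) * τ) / 2 = (s + 1 / 2) * τ by ring,
      show ((s : ℝ) + 1) * τ - s * τ = τ by ring] at this
    simp only [F]
    push_cast
    linarith
  calc _ ≤ ∑ s ∈ range j, (F (s + 1) - F s) := sum_le_sum hcell
    _ = F j - F 0 := sum_range_sub F j
    _ = τ ^ 2 / 8 * (g (j * τ) - g 0) := by simp only [F, Nat.cast_zero, zero_mul]; ring

theorem monotoneOn_sub_rpow_neg {α : ℝ} (hα : 0 ≤ α) (T : ℝ) :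
    MonotoneOn (fun x : ℝ ↦ (T - x) ^ (-α)) (Iio T) := fun _ _ y hy hxy ↦
  Real.rpow_le_rpow_of_nonpos (sub_pos.2 hy) (by linarith) (by linarith)

theorem integral_sub_midpoint_mul_rpow_neg {α a b : ℝ} (hα : α < 1) (hab : a ≤ b) :
    ∫ x in a..b, (x - (a + b) / 2) * (b - x) ^ (-α)
      = α * (b - a) ^ (2 - α) / (2 * (1 - α) * (2 - α)) := by
  set h := b - a with hh
  have hh₀ : 0 ≤ h := by linarith
  have hsubst : ∫ x in a..b, (x - (a + b) / 2) * (b - x) ^ (-α)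
      = ∫ u in (0 : ℝ)..h, (h / 2 - u) * u ^ (-α) := by
    have := integral_comp_sub_left (a := a) (b := b) (fun u ↦ (h / 2 - u) * u ^ (-α)) b
    rw [sub_self, ← hh] at this
    rw [← this]
    congr 1
    ext x
    rw [hh]
    ring_nf
  have hsplit : EqOn (fun u : ℝ ↦ (h / 2 - u) * u ^ (-α))
      (fun u ↦ h / 2 * u ^ (-α) - u ^ (1 - α)) (uIcc 0 h) := by
    intro u hu
    rw [uIcc_of_le hh₀] at hu
    dsimp only
    rw [sub_eq_add_neg 1 α, Real.rpow_add' hu.1 (by linarith), Real.rpow_one]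
    ring
  have hpow : h ^ (2 - α) = h * h ^ (1 - α) := by
    rw [show 2 - α = 1 + (1 - α) by ring, Real.rpow_add' hh₀ (by linarith), Real.rpow_one]
  rw [hsubst, integral_congr hsplit, intervalIntegral.integral_sub,
    intervalIntegral.integral_const_mul, integral_rpow (by left; linarith),
    integral_rpow (by left; linarith), Real.zero_rpow (by linarith), Real.zero_rpow (by linarith),
    show -α + 1 = 1 - α by ring, show 1 - α + 1 = 2 - α by ring, hpow]
  · have : 1 - α ≠ 0 := by linarith
    have : 2 - α ≠ 0 := by linarith
    field_simp
    ring
  · exact (intervalIntegral.intervalIntegrable_rpow' (by linarith)).const_mul _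
  · exact intervalIntegral.intervalIntegrable_rpow' (by linarith)

section Kernel

variable {α τ : ℝ}

theorem integral_last_cell_eq (hα : α < 1) (hτ : 0 ≤ τ) (j : ℕ) :
    ∫ x in (j : ℝ) * τ..((j : ℝ) + 1) * τ,
      (x - ((j : ℝ) + 1 / 2) * τ) * (((j : ℝ) + 1) * τ - x) ^ (-α)
      = α * τ ^ (2 - α) / (2 * (1 - α) * (2 - α)) := by
  have := integral_sub_midpoint_mul_rpow_neg hα (by nlinarith : (j : ℝ) * τ ≤ (j + 1) * τ)
  rwa [show ((j : ℝ) * τ + (j + 1) * τ) / 2 = (j + 1 / 2) * τ by ring,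
    show ((j : ℝ) + 1) * τ - j * τ = τ by ring] at this

theorem integral_cell_nonneg (hα₀ : 0 ≤ α) (hα₁ : α < 1) (hτ : 0 < τ) {s j : ℕ} (hsj : s ≤ j) :
    0 ≤ ∫ x in (s : ℝ) * τ..((s : ℝ) + 1) * τ,
      (x - ((s : ℝ) + 1 / 2) * τ) * (((j : ℝ) + 1) * τ - x) ^ (-α) := by
  obtain rfl | hlt := hsj.eq_or_lt
  · rw [integral_last_cell_eq hα₁ hτ.le]
    have : 0 < 1 - α := by linarith
    have : 0 < 2 - α := by linarith
    positivity
  have hsj : (s : ℝ) + 1 ≤ j := by exact_mod_cast hlt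
  have hg := (monotoneOn_sub_rpow_neg hα₀ (((j : ℝ) + 1) * τ)).mono
    (fun x (hx : x ∈ Icc ((s : ℝ) * τ) ((s + 1) * τ)) ↦ show x < _ by nlinarith [hx.2])
  have := hg.integral_sub_midpoint_mul_nonneg (by nlinarith)
  rwa [show ((s : ℝ) * τ + (s + 1) * τ) / 2 = (s + 1 / 2) * τ by ring] at this

theorem sum_integral_cell_le (hα : 0 ≤ α) (hτ : 0 < τ) (j : ℕ) :
    ∑ s ∈ range j, ∫ x in (s : ℝ) * τ..((s : ℝ) + 1) * τ,
      (x - ((s : ℝ) + 1 / 2) * τ) * (((j : ℝ) + 1) * τ - x) ^ (-α) ≤ τ ^ (2 - α) / 8 := by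
  have hg : MonotoneOn (fun x : ℝ ↦ (((j : ℝ) + 1) * τ - x) ^ (-α)) (Icc 0 (j * τ)) :=
    (monotoneOn_sub_rpow_neg hα _).mono fun x hx ↦ show x < _ by linarith [hx.2]
  have hpow : τ ^ 2 * τ ^ (-α) = τ ^ (2 - α) := by
    rw [sub_eq_add_neg, Real.rpow_add hτ, Real.rpow_two]
  have h0 : 0 ≤ (((j : ℝ) + 1) * τ - 0) ^ (-α) :=
    Real.rpow_nonneg (by rw [sub_zero]; positivity) _
  refine (sum_integral_sub_midpoint_mul_le hτ.le hg).trans ?_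
  rw [show ((j : ℝ) + 1) * τ - j * τ = τ by ring, ← hpow]
  nlinarith [sq_nonneg τ]

end Kernel

theorem two_add_self_add_sq_le_two_mul_two_rpow {x : ℝ} (hx₀ : 0 ≤ x) (hx₁ : x ≤ 1) :
    2 + x + x ^ 2 ≤ 2 * 2 ^ x := by
  set f : ℝ → ℝ := fun x ↦ 1 + x / 2 + x ^ 2 / 2 - 2 ^ x
  have hderiv : ∀ y, HasDerivAt f (1 / 2 + y - 2 ^ y * Real.log 2) y := fun y ↦
    (((((hasDerivAt_id y).div_const 2).const_add 1).add
      ((hasDerivAt_pow 2 y).div_const 2)).sub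
      (Real.hasStrictDerivAt_const_rpow two_pos y).hasDerivAt).congr_deriv (by simp)
  have hderiv2 : ∀ y, HasDerivAt (fun y ↦ 1 / 2 + y - 2 ^ y * Real.log 2)
      (1 - 2 ^ y * Real.log 2 * Real.log 2) y := fun y ↦
    ((hasDerivAt_id y).const_add _).sub
      ((Real.hasStrictDerivAt_const_rpow two_pos y).hasDerivAt.mul_const (Real.log 2))
  have hconvex : ConvexOn ℝ (Icc 0 1) f := by
    refine convexOn_of_hasDerivWithinAt2_nonneg (convex_Icc 0 1)
      (fun y _ ↦ (hderiv y).continuousAt.continuousWithinAt)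
      (fun y _ ↦ (hderiv y).hasDerivWithinAt) (fun y _ ↦ (hderiv2 y).hasDerivWithinAt) ?_
    rw [interior_Icc]
    rintro y ⟨-, hy⟩
    have h2y : (2 : ℝ) ^ y ≤ 2 := by
      simpa using Real.rpow_le_rpow_of_exponent_le one_le_two hy.le
    -- `2 log² 2 < 1`
    have hlog := Real.log_two_lt_d9
    have hlog₀ := Real.log_two_gt_d9
    nlinarith [mul_le_mul_of_nonneg_right h2y (mul_self_nonneg (Real.log 2))]
  have hfx : f x ≤ max (f 0) (f 1) :=
    hconvex.le_on_segment (by simp) (by simp) (by simpa [segment_eq_Icc] using ⟨hx₀, hx₁⟩)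
  norm_num [f] at hfx
  linarith

theorem inv_eight_add_le_two_rpow_div {α : ℝ} (hα₀ : 0 ≤ α) (hα₁ : α < 1) :
    1 / 8 + α / (2 * (1 - α) * (2 - α)) ≤ 2 ^ α / 4 / ((1 - α) * (2 - α)) := by
  have h₁ : 0 < 1 - α := by linarith
  have h₂ : 0 < 2 - α := by linarith
  rw [div_add_div _ _ (by norm_num) (by positivity), div_div,
    div_le_div_iff₀ (by positivity) (by positivity)]
  nlinarith [two_add_self_add_sq_le_two_mul_two_rpow hα₀ hα₁.le, mul_pos h₁ h₂]

theorem abs_sum_mul_le_mul_sum {ι : Type*} (s : Finset ι) {c w : ι → ℝ} {M : ℝ}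
    (hc : ∀ i ∈ s, |c i| ≤ M) (hw : ∀ i ∈ s, 0 ≤ w i) :
    |∑ i ∈ s, c i * w i| ≤ M * ∑ i ∈ s, w i := by
  rw [mul_sum]
  refine (abs_sum_le_sum_abs _ _).trans (sum_le_sum fun i hi ↦ ?_)
  rw [abs_mul, abs_of_nonneg (hw i hi)]
  exact mul_le_mul_of_nonneg_right (hc i hi) (hw i hi)

theorem stmt_8 (α M τ : ℝ) (hα0 : 0 < α) (hα1 : α < 1) (hM : 0 ≤ M) (hτ : 0 < τ)
    (j : ℕ) (c : ℕ → ℝ) (hc : ∀ s ≤ j, |c s| ≤ M) :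
    |∑ s ∈ Finset.range (j + 1), c s *
        ∫ η in ((s:ℝ) * τ)..(((s:ℝ) + 1) * τ),
          (η - ((s:ℝ) + 1/2) * τ) * (((j:ℝ) + 1) * τ - η) ^ (-α)|
      ≤ (2 ^ α * M / 4) * τ ^ (2 - α) / ((1 - α) * (2 - α)) := by
  set I : ℕ → ℝ := fun s ↦ ∫ η in ((s:ℝ) * τ)..(((s:ℝ) + 1) * τ),
    (η - ((s:ℝ) + 1/2) * τ) * (((j:ℝ) + 1) * τ - η) ^ (-α)
  calc |∑ s ∈ range (j + 1), c s * I s|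
      ≤ M * ∑ s ∈ range (j + 1), I s :=
        abs_sum_mul_le_mul_sum _ (fun s hs ↦ hc s (Nat.lt_succ_iff.1 (mem_range.1 hs)))
          fun s hs ↦ integral_cell_nonneg hα0.le hα1 hτ (Nat.lt_succ_iff.1 (mem_range.1 hs))
    _ = M * (∑ s ∈ range j, I s + I j) := by rw [sum_range_succ]
    _ ≤ M * (τ ^ (2 - α) / 8 + α * τ ^ (2 - α) / (2 * (1 - α) * (2 - α))) := by
        gcongr
        · exact sum_integral_cell_le hα0.le hτ j
        · exact (integral_last_cell_eq hα1 hτ.le j).le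
    _ = M * τ ^ (2 - α) * (1 / 8 + α / (2 * (1 - α) * (2 - α))) := by ring
    _ ≤ M * τ ^ (2 - α) * (2 ^ α / 4 / ((1 - α) * (2 - α))) := by
        gcongr
        exact inv_eight_add_le_two_rpow_div hα0.le hα1
    _ = 2 ^ α * M / 4 * τ ^ (2 - α) / ((1 - α) * (2 - α)) := by ring
end

section
/- Discrete summation-by-parts estimate (Lemma 3 core): Let N ≥ 2, h = 1/N, a : {1,…,N} → ℝ with 0 < a_i ≤ c₂, v : {0,…,N} → [0,∞), and w : {1,…,N} → ℝ (playing the role of a_i y_{x̄,i}). Then (1/h²) ∑_{i=1}^{N−1} v_i (w_{i+1} − w_i)² h ≤ (4c₂/h²) ∑_{i=1}^{N} v_i (w_i²/a_i) h − (2/h) ∑_{i=1}^{N} ((v_i − v_{i−1})/h) w_i² h − (2/h)(v_N w_N² + v_0 w_1²). -/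
open Finset

/-!
Both sides are `1 / h` times sums without mesh factors. Abel summation turns the sum of
`(v i - v (i - 1)) * w i ^ 2` into sums of `v i * w i ^ 2` and `v i * w (i + 1) ^ 2`, so that
after the boundary terms cancel the claim reduces to `(x - y) ^ 2 ≤ 2 x ^ 2 + 2 y ^ 2` termwise,
together with `w i ^ 2 ≤ c₂ * (w i ^ 2 / a i)`.
-/

theorem sum_Icc_one_comp_pred {M : Type*} [AddCommMonoid M] (g : ℕ → M) (m : ℕ) :
    ∑ i ∈ Icc 1 (m + 1), g (i - 1) = g 0 + ∑ i ∈ Icc 1 m, g i := by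
  induction m with
  | zero => simp
  | succ m ih =>
    rw [sum_Icc_succ_top (by omega), ih, sum_Icc_succ_top (by omega), add_assoc]
    rfl

theorem sum_Icc_sub_pred_mul {R : Type*} [CommRing R] (v f : ℕ → R) (m : ℕ) :
    ∑ i ∈ Icc 1 (m + 1), (v i - v (i - 1)) * f i
      = ∑ i ∈ Icc 1 (m + 1), v i * f i - v 0 * f 1 - ∑ i ∈ Icc 1 m, v i * f (i + 1) := by
  have hshift : ∑ i ∈ Icc 1 (m + 1), v (i - 1) * f i
      = ∑ i ∈ Icc 1 (m + 1), v (i - 1) * f (i - 1 + 1) :=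
    sum_congr rfl fun i hi ↦ by rw [Nat.sub_add_cancel (mem_Icc.mp hi).1]
  rw [sum_congr rfl fun i _ ↦ sub_mul (v i) (v (i - 1)) (f i), sum_sub_distrib, hshift,
    sum_Icc_one_comp_pred (fun j ↦ v j * f (j + 1))]
  ring

section OrderedField

variable {K : Type*} [Field K] [LinearOrder K] [IsStrictOrderedRing K]

theorem le_mul_div_of_le {x a c : K} (hx : 0 ≤ x) (ha : 0 < a) (hac : a ≤ c) :
    x ≤ c * (x / a) := by
  rw [← mul_div_assoc, le_div_iff₀ ha, mul_comm]
  exact mul_le_mul_of_nonneg_right hac hx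

theorem sum_mul_sub_sq_le (m : ℕ) (c : K) (a v w : ℕ → K)
    (ha : ∀ i, 1 ≤ i → i ≤ m + 1 → 0 < a i ∧ a i ≤ c) (hv : ∀ i ≤ m + 1, 0 ≤ v i) :
    ∑ i ∈ Icc 1 m, v i * (w (i + 1) - w i) ^ 2
      ≤ 4 * c * ∑ i ∈ Icc 1 (m + 1), v i * (w i ^ 2 / a i)
        - 2 * ∑ i ∈ Icc 1 (m + 1), (v i - v (i - 1)) * w i ^ 2
        - 2 * (v (m + 1) * w (m + 1) ^ 2 + v 0 * w 1 ^ 2) := by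
  have weighted : ∑ i ∈ Icc 1 (m + 1), v i * w i ^ 2
      ≤ c * ∑ i ∈ Icc 1 (m + 1), v i * (w i ^ 2 / a i) := by
    rw [mul_sum]
    refine sum_le_sum fun i hi ↦ ?_
    obtain ⟨hi1, him⟩ := mem_Icc.mp hi
    obtain ⟨hai, haic⟩ := ha i hi1 him
    rw [mul_left_comm]
    exact mul_le_mul_of_nonneg_left (le_mul_div_of_le (sq_nonneg _) hai haic) (hv i him)
  have young : ∑ i ∈ Icc 1 m, v i * (w (i + 1) - w i) ^ 2
      ≤ 2 * ∑ i ∈ Icc 1 m, v i * w (i + 1) ^ 2 + 2 * ∑ i ∈ Icc 1 m, v i * w i ^ 2 := by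
    rw [mul_sum, mul_sum, ← sum_add_distrib]
    refine sum_le_sum fun i hi ↦ ?_
    have hvi : 0 ≤ v i := hv i ((mem_Icc.mp hi).2.trans m.le_succ)
    nlinarith [mul_nonneg hvi (sq_nonneg (w (i + 1) + w i))]
  have split_top := sum_Icc_succ_top (Nat.le_add_left 1 m) fun i ↦ v i * w i ^ 2
  rw [sum_Icc_sub_pred_mul]
  have hvw : 0 ≤ v (m + 1) * w (m + 1) ^ 2 := mul_nonneg (hv _ le_rfl) (sq_nonneg _)
  linarith

end OrderedField

theorem stmt_14_general (N : ℕ) (hN : 2 ≤ N) (h c₂ : ℝ) (hh : h = 1 / (N:ℝ))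
    (a : ℕ → ℝ) (ha : ∀ i, 1 ≤ i → i ≤ N → 0 < a i ∧ a i ≤ c₂)
    (v : ℕ → ℝ) (hv : ∀ i ≤ N, 0 ≤ v i)
    (w : ℕ → ℝ) :
    (1 / h ^ 2) * ∑ i ∈ Finset.Icc 1 (N - 1), v i * (w (i + 1) - w i) ^ 2 * h
      ≤ (4 * c₂ / h ^ 2) * ∑ i ∈ Finset.Icc 1 N, v i * ((w i) ^ 2 / a i) * h
        - (2 / h) * ∑ i ∈ Finset.Icc 1 N, ((v i - v (i - 1)) / h) * (w i) ^ 2 * h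
        - (2 / h) * (v N * (w N) ^ 2 + v 0 * (w 1) ^ 2) := by
  obtain ⟨m, rfl⟩ : ∃ m, N = m + 1 := ⟨N - 1, by omega⟩
  have hpos : 0 < h := by rw [hh]; positivity
  have core := mul_le_mul_of_nonneg_left (sum_mul_sub_sq_le m c₂ a v w ha hv)
    (one_div_pos.mpr hpos).le
  have hcancel : ∀ i, (v i - v (i - 1)) / h * w i ^ 2 * h = (v i - v (i - 1)) * w i ^ 2 :=
    fun i ↦ by field_simp
  simp only [hcancel, ← sum_mul, Nat.add_sub_cancel]
  exact (Eq.trans_le (by field_simp) core).trans_eq (by field_simp)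

theorem stmt_14 (N : ℕ) (hN : 2 ≤ N) (h c₂ : ℝ) (hh : h = 1 / (N:ℝ)) (hc₂ : 0 < c₂)
    (a : ℕ → ℝ) (ha : ∀ i, 1 ≤ i → i ≤ N → 0 < a i ∧ a i ≤ c₂)
    (v : ℕ → ℝ) (hv : ∀ i ≤ N, 0 ≤ v i)
    (w : ℕ → ℝ) :
    (1 / h ^ 2) * ∑ i ∈ Finset.Icc 1 (N - 1), v i * (w (i + 1) - w i) ^ 2 * h
      ≤ (4 * c₂ / h ^ 2) * ∑ i ∈ Finset.Icc 1 N, v i * ((w i) ^ 2 / a i) * h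
        - (2 / h) * ∑ i ∈ Finset.Icc 1 N, ((v i - v (i - 1)) / h) * (w i) ^ 2 * h
        - (2 / h) * (v N * (w N) ^ 2 + v 0 * (w 1) ^ 2) :=
  stmt_14_general N hN h c₂ hh a ha v hv w
end
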